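/- For every n ≡ 1 (mod 16) with n ≥ 17, there exists an almost 2-perfect 8-cycle system of order n. -/

import Mathlib

/-!
Write `n = 16t + 1` and induct on `t`. A vertex set `S ∪ A` of size `16(t+1) + 1`, with
`|S| = 16t + 1`, `|A| = 16` and a chosen vertex `v ∈ S`, has its edges partitioned into
those of `K_S`, those of the `K_17` on `A ∪ {v}` and those of the `K_{16t,16}` between
`S \ {v}` and `A`. Almost 2-perfect decompositions glue along edge-disjoint unions and are
carried along vertex relabellings, so it suffices to have one for `K_17` and one for `K_{4,4}`
(which tiles `K_{16t,16}`). The former is the cyclic development of two base cycles over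
`ℤ/17`, the latter two explicit cycles that serve as each other's inside cycles.
-/

open Finset

/-- The edge set of the closed walk visiting `f 0, f 1, ..., f (m-1)` and back to `f 0`. -/
def cycleEdges {V : Type*} [DecidableEq V] (m : ℕ) (f : ℕ → V) : Finset (Sym2 V) :=
  (Finset.range m).image (fun i => s(f i, f ((i + 1) % m)))

/-- `f` describes an `m`-cycle: its first `m` values are pairwise distinct. -/
def IsCycleMap {V : Type*} (m : ℕ) (f : ℕ → V) : Prop :=
  Set.InjOn f ↑(Finset.range m)

/-- Vertex set of the cycle described by `f`. -/
def cycleVerts {V : Type*} [DecidableEq V] (m : ℕ) (f : ℕ → V) : Finset V :=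
  (Finset.range m).image f

/-- `g` is an inside `m`-cycle of `f`: same vertex set and edge-disjoint. -/
def IsInsideOf {V : Type*} [DecidableEq V] (m : ℕ) (g f : ℕ → V) : Prop :=
  IsCycleMap m g ∧ cycleVerts m g = cycleVerts m f ∧
    Disjoint (cycleEdges m f) (cycleEdges m g)

/-- Edge set of the complete graph on `V`. -/
def kEdges (V : Type*) [Fintype V] [DecidableEq V] : Finset (Sym2 V) :=
  Finset.univ.filter (fun e => ¬ e.IsDiag)

/-- Edge set of the complete bipartite graph `K_{r,s}`. -/
def bipEdges (r s : ℕ) : Finset (Sym2 (Fin r ⊕ Fin s)) :=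
  (Finset.univ : Finset (Fin r × Fin s)).image (fun p => s(Sum.inl p.1, Sum.inr p.2))

/-- `E` admits an almost 2-perfect 8-cycle decomposition. -/
def HasA2PDecomp {V : Type*} [DecidableEq V] (E : Finset (Sym2 V)) : Prop :=
  ∃ (k : ℕ) (c c' : Fin k → ℕ → V),
    (∀ i, IsCycleMap 8 (c i)) ∧
    (∀ i j, i ≠ j → Disjoint (cycleEdges 8 (c i)) (cycleEdges 8 (c j))) ∧
    Finset.univ.sup (fun i => cycleEdges 8 (c i)) = E ∧
    (∀ i, IsInsideOf 8 (c' i) (c i)) ∧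
    (∀ i j, i ≠ j → Disjoint (cycleEdges 8 (c' i)) (cycleEdges 8 (c' j))) ∧
    Finset.univ.sup (fun i => cycleEdges 8 (c' i)) = E

/-- `E` admits an almost 2-perfect 8-cycle packing with leave `L`. -/
def HasA2PPacking {V : Type*} [DecidableEq V] (E L : Finset (Sym2 V)) : Prop :=
  L ⊆ E ∧ ∃ (k : ℕ) (c c' : Fin k → ℕ → V),
    (∀ i, IsCycleMap 8 (c i)) ∧
    (∀ i j, i ≠ j → Disjoint (cycleEdges 8 (c i)) (cycleEdges 8 (c j))) ∧
    Finset.univ.sup (fun i => cycleEdges 8 (c i)) = E \ L ∧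
    (∀ i, IsInsideOf 8 (c' i) (c i)) ∧
    (∀ i j, i ≠ j → Disjoint (cycleEdges 8 (c' i)) (cycleEdges 8 (c' j))) ∧
    Finset.univ.sup (fun i => cycleEdges 8 (c' i)) = E \ L

/-- A 1-factor (perfect matching) as a set of edges. -/
def IsOneFactor {V : Type*} (L : Finset (Sym2 V)) : Prop :=
  (∀ e ∈ L, ¬ e.IsDiag) ∧ ∀ v : V, ∃! e, e ∈ L ∧ v ∈ e

open Function

section Cycles

variable {V W : Type*} {m : ℕ}

lemma IsCycleMap.comp {φ : V → W} {f : ℕ → V} (hφ : Injective φ) (hf : IsCycleMap m f) :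
    IsCycleMap m (φ ∘ f) :=
  hφ.injOn.comp hf (Set.mapsTo_univ _ _)

variable [DecidableEq V] [DecidableEq W]

lemma cycleEdges_comp (φ : V → W) (f : ℕ → V) :
    cycleEdges m (φ ∘ f) = (cycleEdges m f).image (Sym2.map φ) := by
  simp only [cycleEdges, image_image]; rfl

lemma cycleVerts_comp (φ : V → W) (f : ℕ → V) :
    cycleVerts m (φ ∘ f) = (cycleVerts m f).image φ := by
  simp only [cycleVerts, image_image]

lemma IsInsideOf.comp {φ : V → W} {g f : ℕ → V} (hφ : Injective φ) (h : IsInsideOf m g f) :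
    IsInsideOf m (φ ∘ g) (φ ∘ f) := by
  obtain ⟨hg, hverts, hdisj⟩ := h
  refine ⟨hg.comp hφ, by rw [cycleVerts_comp, cycleVerts_comp, hverts], ?_⟩
  rw [cycleEdges_comp, cycleEdges_comp]
  exact (disjoint_image (Sym2.map.injective hφ)).2 hdisj

lemma isCycleMap_iff_card {f : ℕ → V} : IsCycleMap m f ↔ #(cycleVerts m f) = m := by
  have h := card_image_iff (s := range m) (f := f)
  rw [card_range] at h
  exact h.symm

lemma isInsideOf_iff {g f : ℕ → V} :
    IsInsideOf m g f ↔ #(cycleVerts m g) = m ∧ cycleVerts m g = cycleVerts m f ∧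
      Disjoint (cycleEdges m f) (cycleEdges m g) := by
  rw [IsInsideOf, isCycleMap_iff_card]

lemma IsCycleMap.not_isDiag {f : ℕ → V} (hf : IsCycleMap m f) (hm : 2 ≤ m) {e : Sym2 V}
    (he : e ∈ cycleEdges m f) : ¬ e.IsDiag := by
  obtain ⟨j, hj, rfl⟩ := mem_image.1 he
  rw [mem_range] at hj
  rw [Sym2.mk_isDiag_iff]
  intro h
  have hj' := hf (by simpa using hj) (by simpa using Nat.mod_lt (j + 1) (by omega)) h
  rcases Nat.lt_or_ge (j + 1) m with hlt | hge
  · rw [Nat.mod_eq_of_lt hlt] at hj'; omega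
  · rw [show j + 1 = m by omega, Nat.mod_self] at hj'; omega

end Cycles

section Decompositions

variable {V W ι κ : Type*} [DecidableEq V] [DecidableEq W] [Fintype ι] [Fintype κ] {m : ℕ}

def IsCycleDecomp (m : ℕ) (E : Finset (Sym2 V)) (c : ι → ℕ → V) : Prop :=
  (∀ i, IsCycleMap m (c i)) ∧ Pairwise (Disjoint on fun i => cycleEdges m (c i)) ∧
    univ.sup (fun i => cycleEdges m (c i)) = E

def IsA2PDecomp (m : ℕ) (E : Finset (Sym2 V)) (c c' : ι → ℕ → V) : Prop :=
  IsCycleDecomp m E c ∧ IsCycleDecomp m E c' ∧ ∀ i, IsInsideOf m (c' i) (c i)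

namespace IsCycleDecomp

variable {E E₁ E₂ : Finset (Sym2 V)}

lemma comp_equiv {c : ι → ℕ → V} (h : IsCycleDecomp m E c) (e : κ ≃ ι) :
    IsCycleDecomp m E (c ∘ e) := by
  obtain ⟨hcyc, hdisj, rfl⟩ := h
  refine ⟨fun i => hcyc (e i), fun i j hij => hdisj (e.injective.ne hij), ?_⟩
  ext x
  simp only [mem_sup, mem_univ, true_and, comp_apply]
  exact (e.surjective.exists (p := fun i => x ∈ cycleEdges m (c i))).symm

lemma sumElim {c₁ : ι → ℕ → V} {c₂ : κ → ℕ → V} (h₁ : IsCycleDecomp m E₁ c₁)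
    (h₂ : IsCycleDecomp m E₂ c₂) (hE : Disjoint E₁ E₂) :
    IsCycleDecomp m (E₁ ∪ E₂) (Sum.elim c₁ c₂) := by
  obtain ⟨hcyc₁, hdisj₁, rfl⟩ := h₁
  obtain ⟨hcyc₂, hdisj₂, rfl⟩ := h₂
  refine ⟨Sum.forall.2 ⟨hcyc₁, hcyc₂⟩, ?_, ?_⟩
  · rintro (i | i) (j | j) hij
    · exact hdisj₁ fun h => hij (congrArg _ h)
    · exact hE.mono (le_sup (f := fun i => cycleEdges m (c₁ i)) (mem_univ i))
        (le_sup (f := fun j => cycleEdges m (c₂ j)) (mem_univ j))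
    · exact hE.symm.mono (le_sup (f := fun i => cycleEdges m (c₂ i)) (mem_univ i))
        (le_sup (f := fun j => cycleEdges m (c₁ j)) (mem_univ j))
    · exact hdisj₂ fun h => hij (congrArg _ h)
  · ext x
    simp [mem_sup, Sum.exists]

lemma comp {c : ι → ℕ → V} (h : IsCycleDecomp m E c) {φ : V → W} (hφ : Injective φ) :
    IsCycleDecomp m (E.image (Sym2.map φ)) (fun i => φ ∘ c i) := by
  obtain ⟨hcyc, hdisj, rfl⟩ := h
  refine ⟨fun i => (hcyc i).comp hφ, fun i j hij => ?_, ?_⟩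
  · simp only [onFun, cycleEdges_comp]
    exact (disjoint_image (Sym2.map.injective hφ)).2 (hdisj hij)
  · simp only [cycleEdges_comp, sup_eq_biUnion]
    exact biUnion_image.symm

end IsCycleDecomp

namespace IsA2PDecomp

variable {E E₁ E₂ : Finset (Sym2 V)}

lemma comp_equiv {c c' : ι → ℕ → V} (h : IsA2PDecomp m E c c') (e : κ ≃ ι) :
    IsA2PDecomp m E (c ∘ e) (c' ∘ e) :=
  ⟨h.1.comp_equiv e, h.2.1.comp_equiv e, fun i => h.2.2 (e i)⟩

lemma sumElim {c₁ c₁' : ι → ℕ → V} {c₂ c₂' : κ → ℕ → V} (h₁ : IsA2PDecomp m E₁ c₁ c₁')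
    (h₂ : IsA2PDecomp m E₂ c₂ c₂') (hE : Disjoint E₁ E₂) :
    IsA2PDecomp m (E₁ ∪ E₂) (Sum.elim c₁ c₂) (Sum.elim c₁' c₂') :=
  ⟨h₁.1.sumElim h₂.1 hE, h₁.2.1.sumElim h₂.2.1 hE, Sum.forall.2 ⟨h₁.2.2, h₂.2.2⟩⟩

lemma comp {c c' : ι → ℕ → V} (h : IsA2PDecomp m E c c') {φ : V → W} (hφ : Injective φ) :
    IsA2PDecomp m (E.image (Sym2.map φ)) (fun i => φ ∘ c i) (fun i => φ ∘ c' i) :=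
  ⟨h.1.comp hφ, h.2.1.comp hφ, fun i => (h.2.2 i).comp hφ⟩

end IsA2PDecomp

lemma hasA2PDecomp_iff {E : Finset (Sym2 V)} :
    HasA2PDecomp E ↔ ∃ (ι : Type) (_ : Fintype ι) (c c' : ι → ℕ → V), IsA2PDecomp 8 E c c' := by
  constructor
  · rintro ⟨k, c, c', hcyc, hdisj, hsup, hin, hdisj', hsup'⟩
    exact ⟨Fin k, inferInstance, c, c', ⟨hcyc, hdisj, hsup⟩, ⟨fun i => (hin i).1, hdisj', hsup'⟩,
      hin⟩
  · rintro ⟨ι, _, c, c', h⟩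
    obtain ⟨⟨hcyc, hdisj, hsup⟩, ⟨-, hdisj', hsup'⟩, hin⟩ :=
      h.comp_equiv (Fintype.equivFin ι).symm
    exact ⟨_, _, _, hcyc, fun i j hij => hdisj hij, hsup, hin, fun i j hij => hdisj' hij, hsup'⟩

lemma hasA2PDecomp_empty : HasA2PDecomp (∅ : Finset (Sym2 V)) :=
  hasA2PDecomp_iff.2 ⟨Empty, inferInstance, Empty.elim, Empty.elim,
    ⟨Empty.rec, Empty.rec, by simp⟩, ⟨Empty.rec, Empty.rec, by simp⟩, Empty.rec⟩

namespace HasA2PDecomp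

variable {E E₁ E₂ : Finset (Sym2 V)}

lemma union (h₁ : HasA2PDecomp E₁) (h₂ : HasA2PDecomp E₂) (hE : Disjoint E₁ E₂) :
    HasA2PDecomp (E₁ ∪ E₂) := by
  obtain ⟨ι, _, c₁, c₁', h₁⟩ := hasA2PDecomp_iff.1 h₁
  obtain ⟨κ, _, c₂, c₂', h₂⟩ := hasA2PDecomp_iff.1 h₂
  exact hasA2PDecomp_iff.2 ⟨ι ⊕ κ, inferInstance, _, _, h₁.sumElim h₂ hE⟩

lemma image (h : HasA2PDecomp E) {φ : V → W} (hφ : Injective φ) :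
    HasA2PDecomp (E.image (Sym2.map φ)) := by
  obtain ⟨ι, _, c, c', h⟩ := hasA2PDecomp_iff.1 h
  exact hasA2PDecomp_iff.2 ⟨ι, inferInstance, _, _, h.comp hφ⟩

end HasA2PDecomp

end Decompositions

section CyclicDevelopment

variable {G : Type*} [AddCommGroup G] [Fintype G] [DecidableEq G] {m : ℕ} {b : ℕ → G}

/-- Cyclic development of a base cycle: by translation invariance every check reduces to the base
cycle. -/
lemma isCycleDecomp_translates (hm : 2 ≤ m) (hb : IsCycleMap m b)
    (hdisj : ∀ d ≠ 0, Disjoint (cycleEdges m b) ((cycleEdges m b).image (Sym2.map (· + d))))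
    (hcover : ∀ d ≠ 0, ∃ g, s(g, g + d) ∈ cycleEdges m b) :
    IsCycleDecomp m (kEdges G) (fun g => (· + g) ∘ b) := by
  refine ⟨fun g => hb.comp (add_left_injective g), fun g h hgh => ?_, ?_⟩
  · have key := (disjoint_image (Sym2.map.injective (add_left_injective g))).2
      (hdisj (h - g) (sub_ne_zero.2 hgh.symm))
    have hshift : (· + h) = (· + g) ∘ (· + (h - g)) := by
      funext x; simp only [comp_apply]; abel
    simp only [onFun, cycleEdges_comp]
    rwa [hshift, Sym2.map_comp, ← image_image]
  · ext e
    induction e using Sym2.ind with | _ x y =>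
    simp only [mem_sup, mem_univ, true_and, kEdges, mem_filter, Sym2.mk_isDiag_iff,
      cycleEdges_comp]
    constructor
    · rintro ⟨g, hg⟩
      obtain ⟨e, he, hex⟩ := mem_image.1 hg
      have hdiag := hb.not_isDiag hm he
      rwa [← Sym2.isDiag_map (add_left_injective g), hex, Sym2.mk_isDiag_iff] at hdiag
    · intro hxy
      obtain ⟨g, hg⟩ := hcover (y - x) (sub_ne_zero.2 (Ne.symm hxy))
      refine ⟨x - g, mem_image.2 ⟨_, hg, ?_⟩⟩
      simp only [Sym2.map_mk]
      congr 1 <;> abel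

/-- Each of the two base cycles uses every difference `±1, …, ±8` of `ℤ/17` exactly once. -/
def k17Base : ℕ → Fin 17 := fun j => ![0, 1, 3, 6, 2, 7, 16, 10] (Fin.ofNat 8 j)

def k17Base' : ℕ → Fin 17 := fun j => ![0, 6, 1, 16, 3, 2, 10, 7] (Fin.ofNat 8 j)

lemma hasA2PDecomp_kEdges_fin_seventeen : HasA2PDecomp (kEdges (Fin 17)) := by
  refine hasA2PDecomp_iff.2 ⟨Fin 17, inferInstance, _, _,
    ⟨isCycleDecomp_translates (b := k17Base) (by norm_num) ?_ ?_ ?_,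
      isCycleDecomp_translates (b := k17Base') (by norm_num) ?_ ?_ ?_,
      fun g => IsInsideOf.comp (add_left_injective g) (isInsideOf_iff.2 ?_)⟩⟩
  all_goals (try rw [isCycleMap_iff_card]); decide

end CyclicDevelopment

def k44Cycle (i : Fin 2) (j : ℕ) : Fin 4 ⊕ Fin 4 :=
  if j % 2 = 0 then .inl (Fin.ofNat 4 (j / 2)) else .inr (Fin.ofNat 4 (j / 2 + 2 * i.val))

lemma hasA2PDecomp_bipEdges_four_four : HasA2PDecomp (bipEdges 4 4) :=
  hasA2PDecomp_iff.2 ⟨Fin 2, inferInstance, k44Cycle, fun i => k44Cycle (i + 1), by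
    simp only [IsA2PDecomp, IsCycleDecomp, Pairwise, onFun, isCycleMap_iff_card,
      isInsideOf_iff]
    decide⟩

section VertexSets

variable {V W : Type*} [DecidableEq V]

def kEdgesOn (S : Finset V) : Finset (Sym2 V) := S.sym2.filter (fun e => ¬ e.IsDiag)

def bipEdgesOn (A B : Finset V) : Finset (Sym2 V) := (A ×ˢ B).image (fun p => s(p.1, p.2))

@[simp]
lemma mk_mem_kEdgesOn {S : Finset V} {x y : V} :
    s(x, y) ∈ kEdgesOn S ↔ x ∈ S ∧ y ∈ S ∧ x ≠ y := by
  simp [kEdgesOn, and_assoc]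

@[simp]
lemma mk_mem_bipEdgesOn {A B : Finset V} {x y : V} :
    s(x, y) ∈ bipEdgesOn A B ↔ x ∈ A ∧ y ∈ B ∨ y ∈ A ∧ x ∈ B := by
  simp only [bipEdgesOn, mem_image, mem_product, Prod.exists, Sym2.eq_iff]
  aesop

lemma kEdgesOn_univ [Fintype V] : kEdgesOn (univ : Finset V) = kEdges V := by
  rw [kEdgesOn, sym2_univ, kEdges]

lemma kEdges_image [Fintype W] [DecidableEq W] (f : W ↪ V) :
    (kEdges W).image (Sym2.map f) = kEdgesOn (univ.map f) := by
  rw [map_eq_image, kEdgesOn, sym2_image, filter_image, sym2_univ, kEdges]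
  simp only [Sym2.isDiag_map f.injective]

lemma bipEdges_image {r s : ℕ} (f : Fin r ↪ V) (g : Fin s ↪ V) :
    (bipEdges r s).image (Sym2.map (Sum.elim f g)) = bipEdgesOn (univ.map f) (univ.map g) := by
  ext e
  induction e using Sym2.ind with | _ x y =>
  simp only [bipEdges, mem_image, mem_univ, true_and, Prod.exists, exists_exists_exists_and_eq,
    Sym2.map_mk, Sum.elim_inl, Sum.elim_inr, Sym2.eq_iff, mk_mem_bipEdgesOn, mem_map]
  aesop

lemma bipEdgesOn_comm (A B : Finset V) : bipEdgesOn A B = bipEdgesOn B A := by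
  ext e
  induction e using Sym2.ind with | _ x y =>
  simp only [mk_mem_bipEdgesOn]
  tauto

lemma bipEdgesOn_union_left (A₁ A₂ B : Finset V) :
    bipEdgesOn (A₁ ∪ A₂) B = bipEdgesOn A₁ B ∪ bipEdgesOn A₂ B := by
  rw [bipEdgesOn, union_product, image_union]; rfl

lemma disjoint_bipEdgesOn_left {A₁ A₂ B : Finset V} (hA : Disjoint A₁ A₂)
    (hB : Disjoint (A₁ ∪ A₂) B) : Disjoint (bipEdgesOn A₁ B) (bipEdgesOn A₂ B) := by
  rw [disjoint_left] at hA hB ⊢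
  intro e
  induction e using Sym2.ind with | _ x y =>
  simp only [mem_union, mk_mem_bipEdgesOn] at hB ⊢
  grind

lemma kEdgesOn_union_of_mem {S A : Finset V} {v : V} (hv : v ∈ S) (hSA : Disjoint S A) :
    kEdgesOn (S ∪ A) = (kEdgesOn S ∪ kEdgesOn (insert v A)) ∪ bipEdgesOn (S.erase v) A := by
  rw [disjoint_left] at hSA
  ext e
  induction e using Sym2.ind with | _ x y =>
  simp only [mem_union, mk_mem_kEdgesOn, mk_mem_bipEdgesOn, mem_insert, mem_erase]
  grind

lemma disjoint_kEdgesOn_kEdgesOn_insert {S A : Finset V} {v : V} (hSA : Disjoint S A) :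
    Disjoint (kEdgesOn S) (kEdgesOn (insert v A)) := by
  rw [disjoint_left] at hSA ⊢
  intro e
  induction e using Sym2.ind with | _ x y =>
  simp only [mk_mem_kEdgesOn, mem_insert]
  grind

lemma disjoint_kEdgesOn_union_bipEdgesOn_erase {S A : Finset V} {v : V} (hSA : Disjoint S A) :
    Disjoint (kEdgesOn S ∪ kEdgesOn (insert v A)) (bipEdgesOn (S.erase v) A) := by
  rw [disjoint_left] at hSA ⊢
  intro e
  induction e using Sym2.ind with | _ x y =>
  simp only [mem_union, mk_mem_kEdgesOn, mk_mem_bipEdgesOn, mem_insert, mem_erase]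
  grind

lemma HasA2PDecomp.kEdgesOn_of_card [Fintype W] [DecidableEq W] (h : HasA2PDecomp (kEdges W))
    {S : Finset V} (hS : #S = Fintype.card W) : HasA2PDecomp (kEdgesOn S) := by
  obtain ⟨f, rfl⟩ := Embedding.exists_of_card_eq_finset hS.symm
  rw [← kEdges_image]
  exact h.image f.injective

lemma HasA2PDecomp.bipEdgesOn_of_card {r s : ℕ} (h : HasA2PDecomp (bipEdges r s))
    {A B : Finset V} (hA : #A = r) (hB : #B = s) (hAB : Disjoint A B) :
    HasA2PDecomp (bipEdgesOn A B) := by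
  obtain ⟨f, rfl⟩ := Embedding.exists_of_card_eq_finset (α := Fin r) (s := A) (by simp [hA])
  obtain ⟨g, rfl⟩ := Embedding.exists_of_card_eq_finset (α := Fin s) (s := B) (by simp [hB])
  rw [← bipEdges_image]
  refine h.image (f.injective.sumElim g.injective fun a b hab => ?_)
  exact disjoint_left.1 hAB (mem_map_of_mem f (mem_univ a)) (hab ▸ mem_map_of_mem g (mem_univ b))

lemma hasA2PDecomp_bipEdgesOn_of_dvd_left {d : ℕ} {A B : Finset V}
    (hblock : ∀ A' ⊆ A, #A' = d → HasA2PDecomp (bipEdgesOn A' B)) (hAB : Disjoint A B)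
    (hd : d ∣ #A) : HasA2PDecomp (bipEdgesOn A B) := by
  obtain ⟨k, hk⟩ := hd
  induction k generalizing A with
  | zero =>
    rw [mul_zero, card_eq_zero] at hk
    simpa [hk, bipEdgesOn] using hasA2PDecomp_empty
  | succ k ih =>
    obtain ⟨A', hA'A, hA'⟩ :=
      Finset.exists_subset_card_eq (hk ▸ Nat.le_mul_of_pos_right d k.succ_pos)
    have hrest : #(A \ A') = d * k := by
      rw [card_sdiff_of_subset hA'A, hk, hA', mul_add_one, Nat.add_sub_cancel]
    rw [← union_sdiff_of_subset hA'A, bipEdgesOn_union_left]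
    refine (hblock A' hA'A hA').union
      (ih (fun A'' h => hblock A'' (h.trans sdiff_subset)) (hAB.mono_left sdiff_subset) hrest)
      (disjoint_bipEdgesOn_left disjoint_sdiff (by rwa [union_sdiff_of_subset hA'A]))

lemma hasA2PDecomp_bipEdgesOn {A B : Finset V} (hA : 4 ∣ #A) (hB : 4 ∣ #B)
    (hAB : Disjoint A B) : HasA2PDecomp (bipEdgesOn A B) := by
  refine hasA2PDecomp_bipEdgesOn_of_dvd_left (fun A' hA' hA'4 => ?_) hAB hA
  rw [bipEdgesOn_comm]
  refine hasA2PDecomp_bipEdgesOn_of_dvd_left (fun B' hB' hB'4 => ?_) (hAB.mono_left hA').symm hB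
  rw [bipEdgesOn_comm]
  exact hasA2PDecomp_bipEdges_four_four.bipEdgesOn_of_card hA'4 hB'4 (hAB.mono hA' hB')

lemma hasA2PDecomp_kEdgesOn {S : Finset V} (hS : #S % 16 = 1) : HasA2PDecomp (kEdgesOn S) := by
  obtain ⟨t, ht⟩ : ∃ t, #S = 16 * t + 1 := ⟨#S / 16, by omega⟩
  induction t generalizing S with
  | zero =>
    obtain ⟨v, rfl⟩ := card_eq_one.1 ht
    simpa [kEdgesOn, filter_singleton] using hasA2PDecomp_empty (V := V)
  | succ t ih =>
    obtain ⟨v, hv⟩ : S.Nonempty := card_pos.1 (by omega)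
    obtain ⟨A, hA, hA16⟩ := Finset.exists_subset_card_eq (show 16 ≤ #(S.erase v) by
      rw [card_erase_of_mem hv]; omega)
    have hAS : A ⊆ S := hA.trans (erase_subset v S)
    have hvA : v ∉ A := fun h => by simpa using hA h
    have hdisj : Disjoint (S \ A) A := sdiff_disjoint
    have hS' : #(S \ A) = 16 * t + 1 := by rw [card_sdiff_of_subset hAS]; omega
    have hvS' : v ∈ S \ A := mem_sdiff.2 ⟨hv, hvA⟩
    rw [← sdiff_union_of_subset hAS, kEdgesOn_union_of_mem hvS' hdisj]
    refine ((ih (by omega) hS').union ?_ (disjoint_kEdgesOn_kEdgesOn_insert hdisj)).union ?_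
      (disjoint_kEdgesOn_union_bipEdgesOn_erase hdisj)
    · exact hasA2PDecomp_kEdges_fin_seventeen.kEdgesOn_of_card
        (by simp [card_insert_of_notMem hvA, hA16])
    · refine hasA2PDecomp_bipEdgesOn ?_ (by omega) (hdisj.mono_left (erase_subset v _))
      rw [card_erase_of_mem hvS', hS']
      omega

end VertexSets

theorem a2p_system_1mod16_general (n : ℕ) (h1 : n % 16 = 1) :
    HasA2PDecomp (kEdges (Fin n)) := by
  rw [← kEdgesOn_univ]
  exact hasA2PDecomp_kEdgesOn (by simpa using h1)

/-- For every `n ≡ 1 (mod 16)`, `n ≥ 17`, there is an A2P 8-cycle system of order `n`. -/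
theorem a2p_system_1mod16 (n : ℕ) (h1 : n % 16 = 1) (h17 : 17 ≤ n) :
    HasA2PDecomp (kEdges (Fin n)) :=
  a2p_system_1mod16_general n h1
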